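/- For every Markov decision process P on finite nonempty state type S and finite nonempty action type A and every target set T ⊆ S, the limit maximal reachability probabilities rmax∞ s = ⨆_{n ∈ ℕ} rmax n s exist and satisfy the Bellman optimality equations: rmax∞ s = 1 for every s ∈ T, and rmax∞ s = max_{a ∈ A} ∑_{s' ∈ S} P s a s' * rmax∞ s' for every s ∉ T. -/

import Mathlib

/-!
`rmaxVal P T` is value iteration for the Bellman operator `v ↦ bellmanMax P T v`, which is
monotone (transition probabilities are nonnegative), maps functions bounded by `1` to functions
bounded by `1` (they sum to `1`) and is continuous (finite maxima of finite sums). Since the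
iteration starts below its first step, the iterates increase; being bounded they converge
pointwise, and a limit of iterates of a continuous map is a fixed point.
-/

/-- Bounded-horizon maximal reachability values of an MDP `P` w.r.t. target set `T`. -/
noncomputable def rmaxVal {S A : Type*} [Fintype S] [Fintype A] [Nonempty A]
    (P : S → A → S → ℝ) (T : Set S) [DecidablePred (· ∈ T)] : ℕ → S → ℝ
  | 0, s => if s ∈ T then 1 else 0
  | n + 1, s => if s ∈ T then 1 else
      Finset.univ.sup' Finset.univ_nonempty fun a => ∑ s', P s a s' * rmaxVal P T n s'

open Finset Filter Topology Function

section Bellman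

variable {S A : Type*} [Fintype S] [Fintype A] [Nonempty A]
  (P : S → A → S → ℝ) (T : Set S) [DecidablePred (· ∈ T)]

noncomputable def bellmanMax (v : S → ℝ) (s : S) : ℝ :=
  if s ∈ T then 1 else univ.sup' univ_nonempty fun a => ∑ s', P s a s' * v s'

lemma rmaxVal_succ (n : ℕ) : rmaxVal P T (n + 1) = bellmanMax P T (rmaxVal P T n) := rfl

lemma rmaxVal_eq_iterate (n : ℕ) :
    rmaxVal P T n = (bellmanMax P T)^[n] (rmaxVal P T 0) := by
  induction n with
  | zero => rfl
  | succ n ih => rw [rmaxVal_succ, ih, iterate_succ_apply']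

lemma bellmanMax_monotone (hP0 : ∀ s a s', 0 ≤ P s a s') : Monotone (bellmanMax P T) := by
  intro v w hvw s
  unfold bellmanMax
  split_ifs
  · rfl
  · exact sup'_mono_fun fun a _ => sum_le_sum fun s' _ =>
      mul_le_mul_of_nonneg_left (hvw s') (hP0 s a s')

lemma bellmanMax_le_one (hP0 : ∀ s a s', 0 ≤ P s a s') (hP1 : ∀ s a, ∑ s', P s a s' = 1)
    {v : S → ℝ} (hv : v ≤ 1) : bellmanMax P T v ≤ 1 := by
  intro s
  unfold bellmanMax
  split_ifs
  · rfl
  · refine sup'_le _ _ fun a _ => ?_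
    calc ∑ s', P s a s' * v s' ≤ ∑ s', P s a s' * 1 :=
          sum_le_sum fun s' _ => mul_le_mul_of_nonneg_left (hv s') (hP0 s a s')
      _ = 1 := by simp [hP1 s a]

lemma continuous_bellmanMax : Continuous (bellmanMax P T) := by
  refine continuous_pi fun s => ?_
  unfold bellmanMax
  split_ifs
  · exact continuous_const
  · exact Continuous.finset_sup'_apply _ fun a _ =>
      continuous_finsetSum _ fun s' _ => continuous_const.mul (continuous_apply s')

lemma rmaxVal_le_one (hP0 : ∀ s a s', 0 ≤ P s a s') (hP1 : ∀ s a, ∑ s', P s a s' = 1)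
    (n : ℕ) : rmaxVal P T n ≤ 1 := by
  induction n with
  | zero => intro s; simp only [rmaxVal]; split_ifs <;> simp
  | succ n ih => exact bellmanMax_le_one P T hP0 hP1 ih

lemma rmaxVal_monotone (hP0 : ∀ s a s', 0 ≤ P s a s') : Monotone (rmaxVal P T) := by
  have hbase : rmaxVal P T 0 ≤ rmaxVal P T 1 := by
    intro s
    simp only [rmaxVal]
    split_ifs
    · rfl
    · obtain ⟨a⟩ := ‹Nonempty A›
      refine le_sup'_of_le _ (mem_univ a) (sum_nonneg fun s' _ => mul_nonneg (hP0 s a s') ?_)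
      split_ifs <;> simp
  refine monotone_nat_of_le_succ fun n => ?_
  induction n with
  | zero => exact hbase
  | succ n ih => exact bellmanMax_monotone P T hP0 ih

end Bellman

theorem rmaxVal_iSup_bellman_general
    {S A : Type*} [Fintype S] [Fintype A] [Nonempty A]
    (P : S → A → S → ℝ)
    (hP0 : ∀ s a s', 0 ≤ P s a s')
    (hP1 : ∀ s a, ∑ s', P s a s' = 1)
    (T : Set S) [DecidablePred (· ∈ T)] :
    (∀ s, Monotone fun n => rmaxVal P T n s) ∧
    (∀ s, BddAbove (Set.range fun n => rmaxVal P T n s)) ∧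
    (∀ s ∈ T, (⨆ n, rmaxVal P T n s) = 1) ∧
    (∀ s ∉ T, (⨆ n, rmaxVal P T n s) =
      Finset.univ.sup' Finset.univ_nonempty fun a =>
        ∑ s', P s a s' * ⨆ n, rmaxVal P T n s') := by
  have hmono s : Monotone fun n => rmaxVal P T n s :=
    fun _ _ hmn => rmaxVal_monotone P T hP0 hmn s
  have hbdd s : BddAbove (Set.range fun n => rmaxVal P T n s) :=
    ⟨1, by rintro _ ⟨n, rfl⟩; exact rmaxVal_le_one P T hP0 hP1 n s⟩
  have hlim : Tendsto (fun n => (bellmanMax P T)^[n] (rmaxVal P T 0)) atTop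
      (𝓝 fun s => ⨆ n, rmaxVal P T n s) := by
    simp only [← rmaxVal_eq_iterate]
    exact tendsto_pi_nhds.2 fun s => tendsto_atTop_ciSup (hmono s) (hbdd s)
  have hfix := congrFun (isFixedPt_of_tendsto_iterate hlim
    (continuous_bellmanMax P T).continuousAt)
  refine ⟨hmono, hbdd, fun s hs => ?_, fun s hs => ?_⟩ <;>
    simpa [bellmanMax, hs] using (hfix s).symm

/-- The limit maximal reachability probabilities `rmax∞ s = ⨆ n, rmax n s` exist
and satisfy the Bellman optimality equations: `rmax∞ s = 1` on `T` and
`rmax∞ s = max_a ∑ s', P s a s' * rmax∞ s'` off `T`. -/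
theorem rmaxVal_iSup_bellman
    {S A : Type*} [Fintype S] [Nonempty S] [Fintype A] [Nonempty A]
    (P : S → A → S → ℝ)
    (hP0 : ∀ s a s', 0 ≤ P s a s')
    (hP1 : ∀ s a, ∑ s', P s a s' = 1)
    (T : Set S) [DecidablePred (· ∈ T)] :
    (∀ s, Monotone fun n => rmaxVal P T n s) ∧
    (∀ s, BddAbove (Set.range fun n => rmaxVal P T n s)) ∧
    (∀ s ∈ T, (⨆ n, rmaxVal P T n s) = 1) ∧
    (∀ s ∉ T, (⨆ n, rmaxVal P T n s) =
      Finset.univ.sup' Finset.univ_nonempty fun a =>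
        ∑ s', P s a s' * ⨆ n, rmaxVal P T n s') :=
  rmaxVal_iSup_bellman_general P hP0 hP1 T
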